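/- arXiv:2004.10888 — 3 statements merged into one kernel-verified Lean document; each statement's English description precedes it below -/
import Mathlib

section
/- Let X be a finite type, d a probability mass function on X, r : X → ℝ, and λ > 0. Write m_d := Σ_x d(x) r(x) and V_d := Σ_x d(x) r(x)² − m_d². Then m_d − λ V_d = ⨆_{y ∈ ℝ} ( Σ_x d(x) (r(x) − λ r(x)² + 2λ r(x) y) − λ y² ), and the supremum is attained uniquely at y = m_d, where it equals m_d − λ V_d. -/
open Finset

/-! Completing the square in `y`: with `m = ∑ d r`, the dual objective equals
`(m - λ V) - λ (y - m)²`, a downward parabola in `y` with vertex `(m, m - λ V)`. -/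

theorem fenchel_objective_eq_sub_mul_sq {X : Type*} [Fintype X] (d r : X → ℝ) (lam y : ℝ) :
    (∑ x, d x * (r x - lam * (r x) ^ 2 + 2 * lam * r x * y)) - lam * y ^ 2 =
      (∑ x, d x * r x) - lam * ((∑ x, d x * (r x) ^ 2) - (∑ x, d x * r x) ^ 2) -
        lam * (y - ∑ x, d x * r x) ^ 2 := by
  have hsum : ∑ x, d x * (r x - lam * (r x) ^ 2 + 2 * lam * r x * y) =
      (∑ x, d x * r x) - lam * ∑ x, d x * (r x) ^ 2 + 2 * lam * y * ∑ x, d x * r x := by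
    simp only [mul_sum, ← sum_sub_distrib, ← sum_add_distrib]
    exact sum_congr rfl fun x _ => by ring
  rw [hsum]
  ring

section Parabola

variable {c lam m : ℝ}

theorem sub_mul_sq_le (hlam : 0 ≤ lam) (y : ℝ) : c - lam * (y - m) ^ 2 ≤ c :=
  sub_le_self c (mul_nonneg hlam (sq_nonneg _))

theorem sub_mul_sq_eq_self_iff (hlam : lam ≠ 0) {y : ℝ} : c - lam * (y - m) ^ 2 = c ↔ y = m := by
  simp [hlam, sub_eq_zero]

theorem iSup_sub_mul_sq (hlam : 0 ≤ lam) : ⨆ y : ℝ, c - lam * (y - m) ^ 2 = c :=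
  le_antisymm (ciSup_le (sub_mul_sq_le hlam))
    (le_ciSup_of_le ⟨c, Set.forall_mem_range.2 (sub_mul_sq_le hlam)⟩ m (by simp))

end Parabola

theorem mean_variance_fenchel_general {X : Type*} [Fintype X]
    (d : X → ℝ)
    (r : X → ℝ) (lam : ℝ) (hlam : 0 < lam) :
    (∑ x, d x * r x) - lam * ((∑ x, d x * (r x) ^ 2) - (∑ x, d x * r x) ^ 2) =
      (⨆ y : ℝ, ((∑ x, d x * (r x - lam * (r x) ^ 2 + 2 * lam * r x * y)) - lam * y ^ 2)) ∧
    ∀ y : ℝ,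
      ((∑ x, d x * (r x - lam * (r x) ^ 2 + 2 * lam * r x * y)) - lam * y ^ 2 ≤
        (∑ x, d x * r x) - lam * ((∑ x, d x * (r x) ^ 2) - (∑ x, d x * r x) ^ 2)) ∧
      (((∑ x, d x * (r x - lam * (r x) ^ 2 + 2 * lam * r x * y)) - lam * y ^ 2 =
        (∑ x, d x * r x) - lam * ((∑ x, d x * (r x) ^ 2) - (∑ x, d x * r x) ^ 2)) ↔
        y = ∑ x, d x * r x) := by
  simp only [fenchel_objective_eq_sub_mul_sq d r lam]
  exact ⟨(iSup_sub_mul_sq hlam.le).symm,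
    fun y => ⟨sub_mul_sq_le hlam.le y, sub_mul_sq_eq_self_iff hlam.ne'⟩⟩

/-- Fenchel-dual representation of the mean-variance objective: for a pmf `d` on a finite
type `X`, reward `r : X → ℝ` and `λ > 0`, with `m = ∑ x, d x * r x` and
`V = ∑ x, d x * (r x)² − m²`, we have
`m − λ V = ⨆ y, (∑ x, d x * (r x − λ (r x)² + 2 λ (r x) y) − λ y²)`,
with the supremum attained uniquely at `y = m`. -/
theorem mean_variance_fenchel {X : Type*} [Fintype X]
    (d : X → ℝ) (hd0 : ∀ x, 0 ≤ d x) (hd1 : ∑ x, d x = 1)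
    (r : X → ℝ) (lam : ℝ) (hlam : 0 < lam) :
    (∑ x, d x * r x) - lam * ((∑ x, d x * (r x) ^ 2) - (∑ x, d x * r x) ^ 2) =
      (⨆ y : ℝ, ((∑ x, d x * (r x - lam * (r x) ^ 2 + 2 * lam * r x * y)) - lam * y ^ 2)) ∧
    ∀ y : ℝ,
      ((∑ x, d x * (r x - lam * (r x) ^ 2 + 2 * lam * r x * y)) - lam * y ^ 2 ≤
        (∑ x, d x * r x) - lam * ((∑ x, d x * (r x) ^ 2) - (∑ x, d x * r x) ^ 2)) ∧
      (((∑ x, d x * (r x - lam * (r x) ^ 2 + 2 * lam * r x * y)) - lam * y ^ 2 =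
        (∑ x, d x * r x) - lam * ((∑ x, d x * (r x) ^ 2) - (∑ x, d x * r x) ^ 2)) ↔
        y = ∑ x, d x * r x) :=
  mean_variance_fenchel_general d r lam hlam
end

section
/- (Monotonic policy improvement.) Let X be a finite type, r : X → ℝ, λ ≥ 0, and let D be a set of probability mass functions on X. For d ∈ D define J_λ(d) := m_d − λ V_d, where m_d := Σ_x d(x) r(x) and V_d := Σ_x d(x) r(x)² − m_d². Suppose d₁ ∈ D, set y := m_{d₁}, and suppose d₂ ∈ D maximizes over D the map d ↦ Σ_x d(x) ( r(x) − λ r(x)² + 2λ r(x) y ), i.e. Σ_x d(x)(r(x) − λ r(x)² + 2λ r(x) y) ≤ Σ_x d₂(x)(r(x) − λ r(x)² + 2λ r(x) y) for every d ∈ D. Then J_λ(d₂) ≥ J_λ(d₁). -/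
/-!
Minorize–maximize: the expected augmented reward minus `λ y²` equals
`J_λ(d) − λ (m_d − y)²`, so for `λ ≥ 0` it is a lower bound for `J_λ(d)` that is tight at
`y = m_d`. With `y = m_{d₁}`, maximizing it over `D` therefore gives
`J_λ(d₁) = surrogate(d₁) ≤ surrogate(d₂) ≤ J_λ(d₂)`.
-/

open Finset

namespace MeanVariance

variable {X : Type*} [Fintype X]

def objective (r : X → ℝ) (lam : ℝ) (d : X → ℝ) : ℝ :=
  (∑ x, d x * r x) - lam * ((∑ x, d x * (r x) ^ 2) - (∑ x, d x * r x) ^ 2)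

def surrogate (r : X → ℝ) (lam : ℝ) (d : X → ℝ) (y : ℝ) : ℝ :=
  (∑ x, d x * (r x - lam * (r x) ^ 2 + 2 * lam * r x * y)) - lam * y ^ 2

theorem surrogate_eq (r : X → ℝ) (lam : ℝ) (d : X → ℝ) (y : ℝ) :
    surrogate r lam d y = objective r lam d - lam * ((∑ x, d x * r x) - y) ^ 2 := by
  have hsum : ∑ x, d x * (r x - lam * (r x) ^ 2 + 2 * lam * r x * y) =
      (∑ x, d x * r x) - lam * (∑ x, d x * (r x) ^ 2) + 2 * lam * y * (∑ x, d x * r x) := by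
    simp only [mul_sum, ← sum_sub_distrib, ← sum_add_distrib]
    exact sum_congr rfl fun x _ => by ring
  rw [surrogate, objective, hsum]
  ring

theorem surrogate_le_objective (r : X → ℝ) {lam : ℝ} (hlam : 0 ≤ lam) (d : X → ℝ) (y : ℝ) :
    surrogate r lam d y ≤ objective r lam d := by
  rw [surrogate_eq]
  exact sub_le_self _ (mul_nonneg hlam (sq_nonneg _))

theorem surrogate_mean (r : X → ℝ) (lam : ℝ) (d : X → ℝ) :
    surrogate r lam d (∑ x, d x * r x) = objective r lam d := by
  rw [surrogate_eq, sub_self, zero_pow two_ne_zero, mul_zero, sub_zero]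

end MeanVariance

theorem mvpi_monotonic_improvement_general {X : Type*} [Fintype X]
    (r : X → ℝ) (lam : ℝ) (hlam : 0 ≤ lam)
    (D : Set (X → ℝ))
    (d₁ d₂ : X → ℝ) (hd₁ : d₁ ∈ D)
    (hmax : ∀ d ∈ D,
      (∑ x, d x * (r x - lam * (r x) ^ 2 + 2 * lam * r x * (∑ x, d₁ x * r x))) ≤
      (∑ x, d₂ x * (r x - lam * (r x) ^ 2 + 2 * lam * r x * (∑ x, d₁ x * r x)))) :
    (∑ x, d₂ x * r x) - lam * ((∑ x, d₂ x * (r x) ^ 2) - (∑ x, d₂ x * r x) ^ 2) ≥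
    (∑ x, d₁ x * r x) - lam * ((∑ x, d₁ x * (r x) ^ 2) - (∑ x, d₁ x * r x) ^ 2) := by
  set y := ∑ x, d₁ x * r x
  show MeanVariance.objective r lam d₁ ≤ MeanVariance.objective r lam d₂
  calc MeanVariance.objective r lam d₁
      = MeanVariance.surrogate r lam d₁ y := (MeanVariance.surrogate_mean r lam d₁).symm
    _ ≤ MeanVariance.surrogate r lam d₂ y := sub_le_sub_right (hmax d₁ hd₁) _
    _ ≤ MeanVariance.objective r lam d₂ := MeanVariance.surrogate_le_objective r hlam d₂ y

/-- Monotonic policy improvement for mean-variance policy iteration: if `d₂` maximizes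
over `D` the expected augmented reward `r̂(x; y) = r x − λ (r x)² + 2 λ (r x) y` with
`y = m_{d₁}`, then `J_λ(d₂) ≥ J_λ(d₁)`, where `J_λ(d) = m_d − λ V_d`. -/
theorem mvpi_monotonic_improvement {X : Type*} [Fintype X]
    (r : X → ℝ) (lam : ℝ) (hlam : 0 ≤ lam)
    (D : Set (X → ℝ)) (hD : ∀ d ∈ D, (∀ x, 0 ≤ d x) ∧ ∑ x, d x = 1)
    (d₁ d₂ : X → ℝ) (hd₁ : d₁ ∈ D) (hd₂ : d₂ ∈ D)
    (hmax : ∀ d ∈ D,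
      (∑ x, d x * (r x - lam * (r x) ^ 2 + 2 * lam * r x * (∑ x, d₁ x * r x))) ≤
      (∑ x, d₂ x * (r x - lam * (r x) ^ 2 + 2 * lam * r x * (∑ x, d₁ x * r x)))) :
    (∑ x, d₂ x * r x) - lam * ((∑ x, d₂ x * (r x) ^ 2) - (∑ x, d₂ x * r x) ^ 2) ≥
    (∑ x, d₁ x * r x) - lam * ((∑ x, d₁ x * (r x) ^ 2) - (∑ x, d₁ x * r x) ^ 2) :=
  mvpi_monotonic_improvement_general r lam hlam D d₁ d₂ hd₁ hmax
end

section
/- (Stationarity transfer.) Let E be a real normed vector space, let A B : E → ℝ be differentiable at θ₀ ∈ E, let λ > 0, and define F : E × ℝ → ℝ by F(θ, y) := A(θ) + λ (2 B(θ) y − y²) and J : E → ℝ by J(θ) := A(θ) + λ (B(θ))². If (θ₀, y₀) is a stationary point of F, i.e. the Fréchet derivative of F at (θ₀, y₀) is zero, then y₀ = B(θ₀) and the Fréchet derivative of J at θ₀ is zero. -/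
/-!
The `y`-component of `F'(θ₀, y₀)` is `2λ (B θ₀ - y₀)`, so stationarity with `λ ≠ 0` forces
`y₀ = B θ₀`; at that `y₀` the `θ`-component `A' + 2λ y₀ B'` is exactly
`J'(θ₀) = A' + 2λ B(θ₀) B'`.
-/

open ContinuousLinearMap

section Derivatives

variable {𝕜 E : Type*} [NontriviallyNormedField 𝕜] [NormedAddCommGroup E] [NormedSpace 𝕜 E]
  {A B : E → 𝕜} {a b : E →L[𝕜] 𝕜} {θ : E}

theorem HasFDerivAt.add_const_mul_sq (hA : HasFDerivAt A a θ) (hB : HasFDerivAt B b θ)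
    (lam : 𝕜) :
    HasFDerivAt (fun θ => A θ + lam * B θ ^ 2) (a + (2 * lam * B θ) • b) θ := by
  refine (hA.add ((hB.pow 2).const_mul lam)).congr_fderiv (ContinuousLinearMap.ext fun v => ?_)
  simp only [add_apply, smul_apply, smul_eq_mul]
  ring

theorem HasFDerivAt.add_const_mul_two_mul_mul_snd_sub_snd_sq (hA : HasFDerivAt A a θ)
    (hB : HasFDerivAt B b θ) (lam y : 𝕜) :
    HasFDerivAt (fun p : E × 𝕜 => A p.1 + lam * (2 * B p.1 * p.2 - p.2 ^ 2))
      ((a + (2 * lam * y) • b).comp (fst 𝕜 E 𝕜) + (2 * lam * (B θ - y)) • snd 𝕜 E 𝕜)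
      (θ, y) := by
  have hA' : HasFDerivAt (fun p : E × 𝕜 => A p.1) (a.comp (fst 𝕜 E 𝕜)) (θ, y) :=
    hA.comp (θ, y) hasFDerivAt_fst
  have hB' : HasFDerivAt (fun p : E × 𝕜 => B p.1) (b.comp (fst 𝕜 E 𝕜)) (θ, y) :=
    hB.comp (θ, y) hasFDerivAt_fst
  have hy : HasFDerivAt (fun p : E × 𝕜 => p.2) (snd 𝕜 E 𝕜) (θ, y) := hasFDerivAt_snd
  have h := hA'.add ((((hB'.const_mul 2).mul hy).sub (hy.pow 2)).const_mul lam)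
  refine h.congr_fderiv (ContinuousLinearMap.ext fun p => ?_)
  simp only [nsmul_eq_mul, Nat.cast_ofNat, add_apply, sub_apply, smul_apply,
    comp_apply, coe_fst', coe_snd', smul_eq_mul]
  ring

end Derivatives

/-- Stationarity transfer: if `(θ₀, y₀)` is a stationary point of the lifted two-block
objective `F(θ, y) = A(θ) + λ (2 B(θ) y − y²)` with `λ > 0`, then `y₀ = B(θ₀)` and `θ₀`
is a stationary point of `J(θ) = A(θ) + λ (B(θ))²`. -/
theorem stationarity_transfer {E : Type*} [NormedAddCommGroup E] [NormedSpace ℝ E]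
    (A B : E → ℝ) (θ₀ : E) (y₀ : ℝ)
    (hA : DifferentiableAt ℝ A θ₀) (hB : DifferentiableAt ℝ B θ₀)
    (lam : ℝ) (hlam : 0 < lam)
    (hF : fderiv ℝ (fun p : E × ℝ => A p.1 + lam * (2 * B p.1 * p.2 - p.2 ^ 2)) (θ₀, y₀) = 0) :
    y₀ = B θ₀ ∧ fderiv ℝ (fun θ => A θ + lam * (B θ) ^ 2) θ₀ = 0 := by
  have hDF := (hA.hasFDerivAt.add_const_mul_two_mul_mul_snd_sub_snd_sq hB.hasFDerivAt lam
    y₀).fderiv.symm.trans hF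
  have hy : y₀ = B θ₀ := by
    have h : 2 * lam * (B θ₀ - y₀) = 0 := by simpa using DFunLike.congr_fun hDF (0, 1)
    have hsub : B θ₀ - y₀ = 0 := (mul_eq_zero.mp h).resolve_left (by positivity)
    linarith
  refine ⟨hy, ?_⟩
  rw [(hA.hasFDerivAt.add_const_mul_sq hB.hasFDerivAt lam).fderiv, ← hy]
  ext v
  simpa using DFunLike.congr_fun hDF (v, 0)
end
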